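/- Given p ∈ D_d, define f_M : X → ℝ by f_M(x) = p_{w(x)} / C(d, w(x)), where C(d,k) is the binomial coefficient. Then f_M ∈ P(p), and H(f) ≤ H(f_M) for every f ∈ P(p); i.e., f_M maximizes the Shannon entropy over P(p). -/

import Mathlib

open Finset MeasureTheory Real

noncomputable section

/-- Weight of a binary vector: number of ones. -/
def wt {d : ℕ} (x : Fin d → Bool) : ℕ := (Finset.univ.filter (fun i => x i = true)).card

/-- The set `F_d` of `d`-variate Bernoulli pmfs. -/
def Fd (d : ℕ) : Set ((Fin d → Bool) → ℝ) :=
  {f | (∀ x, 0 ≤ f x) ∧ ∑ x, f x = 1}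

/-- The simplex `D_d` of pmfs on `{0,…,d}`. -/
def Dd (d : ℕ) : Set (Fin (d + 1) → ℝ) :=
  {p | (∀ k, 0 ≤ p k) ∧ ∑ k, p k = 1}

/-- The pmf of the sum of the coordinates: `s(f)_k = ∑_{x : w(x)=k} f(x)`. -/
def sumPmf {d : ℕ} (f : (Fin d → Bool) → ℝ) : Fin (d + 1) → ℝ :=
  fun k => ∑ x ∈ Finset.univ.filter (fun x : Fin d → Bool => wt x = (k : ℕ)), f x

/-- `P(p) = { f ∈ F_d : s(f) = p }`. -/
def Pp (d : ℕ) (p : Fin (d + 1) → ℝ) : Set ((Fin d → Bool) → ℝ) :=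
  {f | f ∈ Fd d ∧ sumPmf f = p}

/-- A selection: `σ(k)` is a binary vector of weight `k` for each `k`. -/
def IsSelection {d : ℕ} (σ : Fin (d + 1) → (Fin d → Bool)) : Prop :=
  ∀ k, wt (σ k) = (k : ℕ)

/-- The extremal pmf `f^σ`: mass `p_k` at `σ(k)`, zero elsewhere. -/
def extPmf {d : ℕ} (p : Fin (d + 1) → ℝ) (σ : Fin (d + 1) → (Fin d → Bool)) :
    (Fin d → Bool) → ℝ :=
  fun x => ∑ k, if σ k = x then p k else 0

lemma wt_le {d : ℕ} (x : Fin d → Bool) : wt x ≤ d := by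
  classical
  calc wt x ≤ (Finset.univ : Finset (Fin d)).card := Finset.card_filter_le _ _
    _ = d := by simp

/-- Shannon entropy of a pmf on a finite set (with the convention `0 · log 0 = 0`,
which holds automatically since `Real.log 0 = 0`). -/
def entropy {S : Type*} [Fintype S] (g : S → ℝ) : ℝ := -∑ s, g s * Real.log (g s)

/-- The pmf `f_M(x) = p_{w(x)} / C(d, w(x))`. -/
def fM (d : ℕ) (p : Fin (d + 1) → ℝ) : (Fin d → Bool) → ℝ :=
  fun x => p ⟨wt x, Nat.lt_succ_of_le (wt_le x)⟩ / (Nat.choose d (wt x) : ℝ)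

-- helper lemmas to be appended after the given defs
section Helpers

variable {d : ℕ}

lemma card_wt (d k : ℕ) :
    (Finset.univ.filter (fun x : Fin d → Bool => wt x = k)).card = d.choose k := by
  classical
  have := Finset.card_powersetCard k (Finset.univ : Finset (Fin d))
  rw [Finset.card_univ, Fintype.card_fin] at this
  rw [← this]
  apply Finset.card_nbij' (fun x => Finset.univ.filter (fun i => x i = true))
    (fun s => fun i => decide (i ∈ s))
  · intro x hx
    simp only [Finset.coe_filter, Set.mem_setOf_eq, Finset.mem_filter, Finset.mem_univ, true_and] at hx
    simp [Finset.mem_powersetCard, ← hx, wt]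
  · intro s hs
    simp only [Finset.mem_coe, Finset.mem_powersetCard] at hs
    show _ ∈ Finset.univ.filter _
    rw [Finset.mem_filter]
    simp only [ Finset.mem_univ, true_and, wt]
    rw [← hs.2]
    congr 1
    ext i
    simp
  · intro x hx
    funext i
    simp
  · intro s hs
    ext i
    simp

/-- fiberwise sum against a weight-dependent function -/
lemma fiber_sum (f : (Fin d → Bool) → ℝ) (g : Fin (d + 1) → ℝ) :
    ∑ x, f x * g ⟨wt x, Nat.lt_succ_of_le (wt_le x)⟩ = ∑ k, sumPmf f k * g k := by
  classical
  rw [← Finset.sum_fiberwise Finset.univ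
    (fun x : Fin d → Bool => (⟨wt x, Nat.lt_succ_of_le (wt_le x)⟩ : Fin (d + 1)))
    (fun x => f x * g ⟨wt x, Nat.lt_succ_of_le (wt_le x)⟩)]
  refine Finset.sum_congr rfl fun k _ => ?_
  rw [sumPmf, Finset.sum_mul]
  apply Finset.sum_congr
  · congr 1
    ext x
    simp [Fin.ext_iff]
  · intro x hx
    simp only [Finset.mem_filter] at hx
    congr 2
    exact Fin.ext hx.2

lemma fM_eq (p : Fin (d + 1) → ℝ) (x : Fin d → Bool) :
    fM d p x = (fun k : Fin (d + 1) => p k / (d.choose (k : ℕ) : ℝ))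
      ⟨wt x, Nat.lt_succ_of_le (wt_le x)⟩ := rfl

end Helpers

/-- `f_M ∈ P(p)` and `f_M` maximizes the Shannon entropy over `P(p)`. -/
theorem fM_maximizes_entropy (d : ℕ) (hd : 1 ≤ d) (p : Fin (d + 1) → ℝ) (hp : p ∈ Dd d) :
    fM d p ∈ Pp d p ∧ ∀ f ∈ Pp d p, entropy f ≤ entropy (fM d p) := by
  classical
  obtain ⟨hp0, hp1⟩ := hp
  set q : Fin (d + 1) → ℝ := fun k => p k / (d.choose (k : ℕ) : ℝ) with hq
  have hchoose : ∀ k : Fin (d + 1), (0 : ℝ) < (d.choose (k : ℕ) : ℝ) := by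
    intro k
    exact_mod_cast Nat.choose_pos (Nat.lt_succ_iff.mp k.isLt)
  have hfM0 : ∀ x, 0 ≤ fM d p x := fun x =>
    div_nonneg (hp0 _) (by positivity)
  -- sumPmf (fM d p) = p
  have hsum : sumPmf (fM d p) = p := by
    funext k
    rw [sumPmf]
    have : ∀ x ∈ Finset.univ.filter (fun x : Fin d → Bool => wt x = (k : ℕ)),
        fM d p x = q k := by
      intro x hx
      simp only [Finset.mem_filter] at hx
      rw [fM_eq]
      congr 1
      exact Fin.ext hx.2
    rw [Finset.sum_congr rfl this, Finset.sum_const, card_wt, nsmul_eq_mul, hq]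
    field_simp
    rw [mul_comm, mul_div_assoc, div_self (ne_of_gt (hchoose k)), mul_one]
  have hfMmem : fM d p ∈ Pp d p := by
    refine ⟨⟨hfM0, ?_⟩, hsum⟩
    have := fiber_sum (d := d) (fM d p) (fun _ => 1)
    simp only [mul_one] at this
    rw [this]
    simp only [hsum]
    exact hp1
  refine ⟨hfMmem, ?_⟩
  intro f hf
  obtain ⟨⟨hf0, hf1⟩, hfs⟩ := hf
  -- positivity of fM where f is positive
  have hpos : ∀ x, 0 < f x → 0 < fM d p x := by
    intro x hfx
    rcases lt_or_eq_of_le (hfM0 x) with h | h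
    · exact h
    -- fM x = 0 → p_{wt x} = 0 → f x = 0
    exfalso
    set k : Fin (d + 1) := ⟨wt x, Nat.lt_succ_of_le (wt_le x)⟩
    have hpk : p k = 0 := by
      have := h.symm
      rw [fM_eq] at this
      have := div_eq_zero_iff.mp this
      rcases this with h' | h'
      · exact h'
      · exact absurd h' (ne_of_gt (hchoose k))
    have hsk : sumPmf f k = 0 := by rw [hfs]; exact hpk
    have : f x = 0 := by
      have hmem : x ∈ Finset.univ.filter (fun y : Fin d → Bool => wt y = (k : ℕ)) := by
        simp [k]
      exact (Finset.sum_eq_zero_iff_of_nonneg (fun y _ => hf0 y)).mp hsk x hmem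
    linarith
  -- Gibbs: ∑ f x * log (fM x) - ∑ f x * log (f x) ≤ ∑ (fM x - f x) = 0
  have gibbs : ∑ x, f x * Real.log (fM d p x) ≤ ∑ x, f x * Real.log (f x) := by
    have key : ∀ x, f x * Real.log (fM d p x) - f x * Real.log (f x) ≤ fM d p x - f x := by
      intro x
      rcases lt_or_eq_of_le (hf0 x) with hx | hx
      · have hM := hpos x hx
        have : Real.log (fM d p x) - Real.log (f x) = Real.log (fM d p x / f x) := by
          rw [Real.log_div (ne_of_gt hM) (ne_of_gt hx)]
        calc f x * Real.log (fM d p x) - f x * Real.log (f x)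
            = f x * Real.log (fM d p x / f x) := by rw [← mul_sub, this]
          _ ≤ f x * (fM d p x / f x - 1) := by
              apply mul_le_mul_of_nonneg_left _ (le_of_lt hx)
              exact Real.log_le_sub_one_of_pos (div_pos hM hx)
          _ = fM d p x - f x := by field_simp
      · rw [← hx]
        simp [hfM0 x]
    have hle := Finset.sum_le_sum (fun x (_ : x ∈ Finset.univ) => key x)
    rw [Finset.sum_sub_distrib, Finset.sum_sub_distrib] at hle
    have hfM1 : ∑ x, fM d p x = 1 := hfMmem.1.2
    rw [hf1, hfM1] at hle
    linarith
  -- ∑ f x * log (fM x) = ∑ fM x * log (fM x)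
  have heq : ∑ x, f x * Real.log (fM d p x) = ∑ x, fM d p x * Real.log (fM d p x) := by
    have h1 : ∑ x, f x * Real.log (fM d p x)
        = ∑ k, sumPmf f k * Real.log (q k) := by
      have := fiber_sum (d := d) f (fun k => Real.log (q k))
      simpa [fM_eq] using this
    have h2 : ∑ x, fM d p x * Real.log (fM d p x)
        = ∑ k, sumPmf (fM d p) k * Real.log (q k) := by
      have := fiber_sum (d := d) (fM d p) (fun k => Real.log (q k))
      simpa [fM_eq] using this
    rw [h1, h2, hfs, hsum]
  rw [entropy, entropy, neg_le_neg_iff]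
  rw [← heq]
  exact gibbs
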